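/- arXiv:2510.09319 — 2 statements merged into one kernel-verified Lean document; each statement's English description precedes it below -/
import Mathlib

section
/- Let f be a transcendental entire function having no oscillatory wandering domain, i.e. no connected component of F(f) is contained in BU(f). Then BU(f) ⊆ J(f). -/
open Filter Topology Bornology Set

noncomputable section

/-- An entire function: holomorphic on all of ℂ. A transcendental entire function
is entire and not a polynomial. -/
def TranscendentalEntire (f : ℂ → ℂ) : Prop :=
  Differentiable ℂ f ∧ ¬ ∃ p : Polynomial ℂ, ∀ z, f z = p.eval z

/-- The escaping set of a single entire function. -/
def escapingSet (f : ℂ → ℂ) : Set ℂ :=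
  {z | Tendsto (fun n => ‖f^[n] z‖) atTop atTop}

/-- The filled Julia set of a single entire function. -/
def filledJuliaSet (f : ℂ → ℂ) : Set ℂ :=
  {z | IsBounded (Set.range fun n => f^[n] z)}

/-- The bungee set of a single entire function. -/
def bungeeSet (f : ℂ → ℂ) : Set ℂ := (escapingSet f ∪ filledJuliaSet f)ᶜ

/-- A transcendental semigroup: a nonempty set of transcendental entire functions
closed under composition. -/
def TranscendentalSemigroup (H : Set (ℂ → ℂ)) : Prop :=
  H.Nonempty ∧ (∀ h ∈ H, TranscendentalEntire h) ∧ ∀ g ∈ H, ∀ h ∈ H, g ∘ h ∈ H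

/-- The filled Julia set of a semigroup. -/
def sgFilledJuliaSet (H : Set (ℂ → ℂ)) : Set ℂ :=
  {z | IsBounded ((fun h => h z) '' H)}

/-- The escaping set of a semigroup. -/
def sgEscapingSet (H : Set (ℂ → ℂ)) : Set ℂ :=
  {z | ∀ R > 0, {h ∈ H | ‖h z‖ ≤ R}.Finite}

/-- The bungee set of a semigroup. -/
def sgBungeeSet (H : Set (ℂ → ℂ)) : Set ℂ := (sgEscapingSet H ∪ sgFilledJuliaSet H)ᶜ

/-- A sequence of functions diverges to ∞ locally uniformly on `U`. -/
def DivergesLocUnifOn (s : ℕ → ℂ → ℂ) (U : Set ℂ) : Prop :=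
  ∀ C ⊆ U, IsCompact C → ∀ M > 0, ∀ᶠ k in atTop, ∀ w ∈ C, M < ‖s k w‖

/-- The Fatou set of a semigroup: points with an open neighborhood on which every
sequence from `H` has a subsequence converging locally uniformly or diverging to ∞
locally uniformly. -/
def sgFatouSet (H : Set (ℂ → ℂ)) : Set ℂ :=
  {z | ∃ U : Set ℂ, IsOpen U ∧ z ∈ U ∧
    ∀ s : ℕ → ℂ → ℂ, (∀ n, s n ∈ H) →
      ∃ φ : ℕ → ℕ, StrictMono φ ∧
        ((∃ g : ℂ → ℂ, TendstoLocallyUniformlyOn (fun k => s (φ k)) g atTop U) ∨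
          DivergesLocUnifOn (fun k => s (φ k)) U)}

/-- The Julia set of a semigroup. -/
def sgJuliaSet (H : Set (ℂ → ℂ)) : Set ℂ := (sgFatouSet H)ᶜ

/-- The semigroup of (positive) iterates of a single function. -/
def iterateSemigroup (f : ℂ → ℂ) : Set (ℂ → ℂ) := {g | ∃ n ≥ 1, g = f^[n]}

/-- The Fatou set of a single function. -/
def fatouSet (f : ℂ → ℂ) : Set ℂ := sgFatouSet (iterateSemigroup f)

/-- The Julia set of a single function. -/
def juliaSet (f : ℂ → ℂ) : Set ℂ := (fatouSet f)ᶜ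

/-- An abelian semigroup of functions. -/
def AbelianSG (H : Set (ℂ → ℂ)) : Prop := ∀ g ∈ H, ∀ h ∈ H, g ∘ h = h ∘ g

/-- `a` is a finite asymptotic value of `f`. -/
def AsymptoticValue (f : ℂ → ℂ) (a : ℂ) : Prop :=
  ∃ γ : ℝ → ℂ, Continuous γ ∧ Tendsto (fun t => ‖γ t‖) atTop atTop ∧
    Tendsto (fun t => f (γ t)) atTop (nhds a)

/-! On a neighbourhood of a Fatou point, every sequence of iterates has a subsequence that
either converges pointwise or tends to `∞` pointwise. Comparing two points of such a
neighbourhood along a sequence of iterates witnessing that one of them does not escape (resp. has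
unbounded orbit) shows that membership in `I(f)` and in `K(f)` is locally constant on `F(f)`,
hence constant on every Fatou component. So a Fatou component meeting `BU(f)` lies in `BU(f)`. -/

theorem IsPreconnected.mem_iff_of_eventually_mem_iff {X : Type*} [TopologicalSpace X]
    {s A : Set X} (hs : IsPreconnected s) (hA : ∀ x ∈ s, ∀ᶠ y in 𝓝 x, y ∈ A ↔ x ∈ A)
    {x y : X} (hx : x ∈ s) (hy : y ∈ s) : x ∈ A ↔ y ∈ A := by
  classical
  have hcont : ContinuousOn (fun y => decide (y ∈ A)) s := fun x hx =>
    ((continuousAt_const (y := decide (x ∈ A))).congr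
      ((hA x hx).mono fun y hy => by simp [hy])).continuousWithinAt
  simpa using hs.constant hcont hx hy

theorem DivergesLocUnifOn.tendsto_norm_atTop {s : ℕ → ℂ → ℂ} {U : Set ℂ}
    (hs : DivergesLocUnifOn s U) {u : ℂ} (hu : u ∈ U) :
    Tendsto (fun k => ‖s k u‖) atTop atTop := by
  refine tendsto_atTop.2 fun M => ?_
  filter_upwards [hs {u} (singleton_subset_iff.2 hu) isCompact_singleton (max M 1) (by positivity)]
    with k hk
  exact (le_max_left M 1).trans (hk u rfl).le

def PointwiseNormalOn (H : Set (ℂ → ℂ)) (U : Set ℂ) : Prop :=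
  ∀ s : ℕ → ℂ → ℂ, (∀ n, s n ∈ H) → ∃ φ : ℕ → ℕ, StrictMono φ ∧
    ((∀ u ∈ U, ∃ c, Tendsto (fun k => s (φ k) u) atTop (𝓝 c)) ∨
      ∀ u ∈ U, Tendsto (fun k => ‖s (φ k) u‖) atTop atTop)

theorem exists_mem_nhds_pointwiseNormalOn {H : Set (ℂ → ℂ)} {v : ℂ} (hv : v ∈ sgFatouSet H) :
    ∃ U ∈ 𝓝 v, PointwiseNormalOn H U := by
  obtain ⟨U, hUo, hvU, hU⟩ := hv
  refine ⟨U, hUo.mem_nhds hvU, fun s hs => ?_⟩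
  obtain ⟨φ, hφ, ⟨g, hg⟩ | hdiv⟩ := hU s hs
  · exact ⟨φ, hφ, Or.inl fun u hu => ⟨g u, hg.tendsto_at hu⟩⟩
  · exact ⟨φ, hφ, Or.inr fun u hu => hdiv.tendsto_norm_atTop hu⟩

theorem exists_iterate_subseq_bounded_of_notMem_escapingSet {f : ℂ → ℂ} {u : ℂ}
    (hu : u ∉ escapingSet f) : ∃ n : ℕ → ℕ, (∀ k, 1 ≤ n k) ∧ Tendsto n atTop atTop ∧
      ∃ R, ∀ k, ‖f^[n k] u‖ ≤ R := by
  simp only [escapingSet, mem_ofPred_eq, tendsto_atTop, not_forall, not_eventually] at hu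
  obtain ⟨R, hR⟩ := hu
  obtain ⟨n, hn, hnR⟩ :=
    extraction_of_frequently_atTop (hR.and_eventually (eventually_ge_atTop 1))
  exact ⟨n, fun k => (hnR k).2, hn.tendsto_atTop, R, fun k => (not_le.1 (hnR k).1).le⟩

theorem exists_iterate_subseq_tendsto_norm_of_notMem_filledJuliaSet {f : ℂ → ℂ} {u : ℂ}
    (hu : u ∉ filledJuliaSet f) : ∃ n : ℕ → ℕ, (∀ k, 1 ≤ n k) ∧
      Tendsto (fun k => ‖f^[n k] u‖) atTop atTop := by
  simp only [filledJuliaSet, mem_ofPred_eq, isBounded_iff_forall_norm_le, forall_mem_range,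
    not_exists, not_forall, not_le] at hu
  have hlarge : ∀ k : ℕ, ∃ n, 1 ≤ n ∧ (k : ℝ) < ‖f^[n] u‖ := fun k => by
    obtain ⟨n, hn⟩ := hu (max k ‖u‖)
    refine ⟨n, Nat.one_le_iff_ne_zero.2 ?_, (le_max_left _ _).trans_lt hn⟩
    rintro rfl
    exact (le_max_right _ _).not_gt hn
  choose n hn1 hn using hlarge
  exact ⟨n, hn1, tendsto_atTop_mono (fun k => (hn k).le) tendsto_natCast_atTop_atTop⟩

theorem PointwiseNormalOn.notMem_escapingSet {f : ℂ → ℂ} {U : Set ℂ}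
    (h : PointwiseNormalOn (iterateSemigroup f) U) {a b : ℂ} (ha : a ∈ U) (hb : b ∈ U)
    (haI : a ∉ escapingSet f) : b ∉ escapingSet f := by
  obtain ⟨n, hn1, hn, R, hR⟩ := exists_iterate_subseq_bounded_of_notMem_escapingSet haI
  obtain ⟨φ, hφ, hconv | hdiv⟩ := h (fun k => f^[n k]) fun k => ⟨n k, hn1 k, rfl⟩
  · intro hbI
    obtain ⟨c, hc⟩ := hconv b hb
    exact not_tendsto_atTop_of_tendsto_nhds hc.norm
      ((show Tendsto (fun m => ‖f^[m] b‖) atTop atTop from hbI).comp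
        (hn.comp hφ.tendsto_atTop))
  · obtain ⟨k, hk⟩ := ((hdiv a ha).eventually_gt_atTop R).exists
    exact absurd (hR (φ k)) hk.not_ge

theorem PointwiseNormalOn.notMem_filledJuliaSet {f : ℂ → ℂ} {U : Set ℂ}
    (h : PointwiseNormalOn (iterateSemigroup f) U) {a b : ℂ} (ha : a ∈ U) (hb : b ∈ U)
    (haK : a ∉ filledJuliaSet f) : b ∉ filledJuliaSet f := by
  obtain ⟨n, hn1, hn⟩ := exists_iterate_subseq_tendsto_norm_of_notMem_filledJuliaSet haK
  obtain ⟨φ, hφ, hconv | hdiv⟩ := h (fun k => f^[n k]) fun k => ⟨n k, hn1 k, rfl⟩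
  · obtain ⟨c, hc⟩ := hconv a ha
    exact absurd (hn.comp hφ.tendsto_atTop) (not_tendsto_atTop_of_tendsto_nhds hc.norm)
  · intro (hbK : IsBounded (range fun m => f^[m] b))
    obtain ⟨C, hC⟩ := isBounded_iff_forall_norm_le.1 hbK
    obtain ⟨k, hk⟩ := ((hdiv b hb).eventually_gt_atTop C).exists
    exact hk.not_ge (hC _ ⟨_, rfl⟩)

theorem eventually_mem_bungeeSet_iff {f : ℂ → ℂ} {v : ℂ} (hv : v ∈ fatouSet f) :
    ∀ᶠ u in 𝓝 v, u ∈ bungeeSet f ↔ v ∈ bungeeSet f := by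
  obtain ⟨U, hU, hnormal⟩ := exists_mem_nhds_pointwiseNormalOn hv
  have hvU := mem_of_mem_nhds hU
  filter_upwards [hU] with u hu
  have hI : u ∈ escapingSet f ↔ v ∈ escapingSet f := not_iff_not.1
    ⟨hnormal.notMem_escapingSet hu hvU, hnormal.notMem_escapingSet hvU hu⟩
  have hK : u ∈ filledJuliaSet f ↔ v ∈ filledJuliaSet f := not_iff_not.1
    ⟨hnormal.notMem_filledJuliaSet hu hvU, hnormal.notMem_filledJuliaSet hvU hu⟩
  simp only [bungeeSet, mem_compl_iff, mem_union, hI, hK]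

theorem stmt_12_general (f : ℂ → ℂ)
    (hosc : ∀ z ∈ fatouSet f, ¬ connectedComponentIn (fatouSet f) z ⊆ bungeeSet f) :
    bungeeSet f ⊆ juliaSet f := by
  intro z hzB hzF
  refine hosc z hzF fun w hw => ?_
  exact (isPreconnected_connectedComponentIn.mem_iff_of_eventually_mem_iff
    (fun x hx => eventually_mem_bungeeSet_iff (connectedComponentIn_subset _ _ hx))
    (mem_connectedComponentIn hzF) hw).1 hzB

/-- a transcendental entire function with no oscillatory wandering domain
satisfies BU(f) ⊆ J(f). -/
theorem stmt_12 (f : ℂ → ℂ) (hf : TranscendentalEntire f)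
    (hosc : ∀ z ∈ fatouSet f, ¬ connectedComponentIn (fatouSet f) z ⊆ bungeeSet f) :
    bungeeSet f ⊆ juliaSet f :=
  stmt_12_general f hosc
end
end

section
/- Let H be a transcendental semigroup having no oscillatory wandering domain, i.e. no connected component of F(H) is contained in BU(H). Then BU(H) ⊆ J(H). -/
open Filter Topology Bornology Set

/-! Membership in the filled Julia set and in the escaping set is detected by sequences in `H`
whose values tend to `∞` at the point, and on a Fatou neighbourhood such divergence at one
point forces divergence at every other point along a subsequence. Hence `BU(H)` is locally
constant on `F(H)`, so a Fatou component meeting `BU(H)` lies inside it. -/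

theorem connectedComponentIn_subset_of_eventually_mem_iff {X : Type*} [TopologicalSpace X]
    {F S : Set X} (h : ∀ z ∈ F, ∀ᶠ w in 𝓝 z, w ∈ F ∧ (w ∈ S ↔ z ∈ S)) {z : X} (hz : z ∈ S) :
    connectedComponentIn F z ⊆ S := by
  by_cases hzF : z ∈ F
  swap
  · simp [connectedComponentIn_eq_empty hzF]
  have hA : IsOpen (F ∩ S) := isOpen_iff_mem_nhds.2 fun w hw => by
    filter_upwards [h w hw.1] with v hv using ⟨hv.1, hv.2.2 hw.2⟩
  have hB : IsOpen (F \ S) := isOpen_iff_mem_nhds.2 fun w hw => by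
    filter_upwards [h w hw.1] with v hv using ⟨hv.1, fun hvS => hw.2 (hv.2.1 hvS)⟩
  have hcover : connectedComponentIn F z ⊆ F ∩ S ∪ F \ S := fun w hw => by
    have := connectedComponentIn_subset F z hw
    by_cases hwS : w ∈ S
    exacts [Or.inl ⟨this, hwS⟩, Or.inr ⟨this, hwS⟩]
  have hdisj : Disjoint (F ∩ S) (F \ S) :=
    disjoint_left.2 fun w hw hw' => hw'.2 hw.2
  exact (isPreconnected_connectedComponentIn.subset_left_of_subset_union hA hB hdisj hcover
    ⟨z, mem_connectedComponentIn hzF, hzF, hz⟩).trans inter_subset_right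

section Semigroup

variable {H : Set (ℂ → ℂ)} {s : ℕ → ℂ → ℂ} {z w : ℂ}

theorem mem_sgFilledJuliaSet_iff :
    z ∈ sgFilledJuliaSet H ↔ IsBounded ((fun h => h z) '' H) := Iff.rfl

theorem notMem_sgFilledJuliaSet_of_tendsto (hs : ∀ n, s n ∈ H)
    (hsz : Tendsto (fun n => ‖s n z‖) atTop atTop) : z ∉ sgFilledJuliaSet H := by
  intro hz
  obtain ⟨C, hC⟩ := isBounded_iff_forall_norm_le.1 (mem_sgFilledJuliaSet_iff.1 hz)
  obtain ⟨n, hn⟩ := (hsz.eventually_gt_atTop C).exists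
  exact (hC _ ⟨s n, hs n, rfl⟩).not_gt hn

theorem exists_tendsto_of_notMem_sgFilledJuliaSet (hz : z ∉ sgFilledJuliaSet H) :
    ∃ s : ℕ → ℂ → ℂ, (∀ n, s n ∈ H) ∧ Tendsto (fun n => ‖s n z‖) atTop atTop := by
  have hlarge : ∀ n : ℕ, ∃ h ∈ H, (n : ℝ) < ‖h z‖ := fun n => by
    by_contra! hsmall
    exact hz <| mem_sgFilledJuliaSet_iff.2 <| isBounded_iff_forall_norm_le.2
      ⟨n, by rintro _ ⟨h, hh, rfl⟩; exact hsmall h hh⟩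
  choose s hsH hsz using hlarge
  exact ⟨s, hsH, tendsto_atTop_mono (fun n => (hsz n).le) tendsto_natCast_atTop_atTop⟩

theorem tendsto_of_mem_sgEscapingSet (hs : ∀ n, s n ∈ H) (hinj : Function.Injective s)
    (hz : z ∈ sgEscapingSet H) : Tendsto (fun n => ‖s n z‖) atTop atTop := by
  refine tendsto_atTop.2 fun b => ?_
  have hfin : {n | ‖s n z‖ ≤ max b 1}.Finite :=
    (hz (max b 1) (by positivity)).preimage hinj.injOn |>.subset fun n hn => ⟨hs n, hn⟩
  rw [← Nat.cofinite_eq_atTop]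
  filter_upwards [hfin.compl_mem_cofinite] with n hn
  exact (le_max_left b 1).trans (not_le.1 (notMem_ofPred_iff.1 hn)).le

theorem exists_injective_bounded_of_notMem_sgEscapingSet (hz : z ∉ sgEscapingSet H) :
    ∃ (s : ℕ → ℂ → ℂ) (R : ℝ), (∀ n, s n ∈ H) ∧ Function.Injective s ∧ ∀ n, ‖s n z‖ ≤ R := by
  obtain ⟨R, -, hinf⟩ : ∃ R > 0, {h ∈ H | ‖h z‖ ≤ R}.Infinite := by
    by_contra! hfin
    exact hz hfin
  let e := Set.Infinite.natEmbedding _ hinf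
  exact ⟨fun n => e n, R, fun n => (e n).2.1, Subtype.coe_injective.comp e.injective,
    fun n => (e n).2.2⟩

def IsNormalOn (H : Set (ℂ → ℂ)) (U : Set ℂ) : Prop :=
  ∀ s : ℕ → ℂ → ℂ, (∀ n, s n ∈ H) →
    ∃ φ : ℕ → ℕ, StrictMono φ ∧
      ((∃ g : ℂ → ℂ, TendstoLocallyUniformlyOn (fun k => s (φ k)) g atTop U) ∨
        DivergesLocUnifOn (fun k => s (φ k)) U)

theorem mem_sgFatouSet_iff :
    z ∈ sgFatouSet H ↔ ∃ U : Set ℂ, IsOpen U ∧ z ∈ U ∧ IsNormalOn H U := Iff.rfl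

variable {U : Set ℂ}

theorem IsNormalOn.exists_subseq_tendsto (hU : IsNormalOn H U) (hs : ∀ n, s n ∈ H)
    (hz : z ∈ U) (hw : w ∈ U) (hsw : Tendsto (fun n => ‖s n w‖) atTop atTop) :
    ∃ φ : ℕ → ℕ, StrictMono φ ∧ Tendsto (fun k => ‖s (φ k) z‖) atTop atTop := by
  obtain ⟨φ, hφ, ⟨g, hg⟩ | hdiv⟩ := hU s hs
  · exact absurd (hg.tendsto_at hw).norm
      (not_tendsto_nhds_of_tendsto_atTop (hsw.comp hφ.tendsto_atTop) _)
  · refine ⟨φ, hφ, tendsto_atTop.2 fun b => ?_⟩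
    filter_upwards [hdiv {z} (singleton_subset_iff.2 hz) isCompact_singleton (max b 1)
      (by positivity)] with k hk
    exact (le_max_left b 1).trans (hk z rfl).le

theorem IsNormalOn.mem_sgFilledJuliaSet (hU : IsNormalOn H U) (hz : z ∈ U) (hw : w ∈ U)
    (hzK : z ∈ sgFilledJuliaSet H) : w ∈ sgFilledJuliaSet H := by
  by_contra hwK
  obtain ⟨s, hs, hsw⟩ := exists_tendsto_of_notMem_sgFilledJuliaSet hwK
  obtain ⟨φ, -, hsz⟩ := hU.exists_subseq_tendsto hs hz hw hsw
  exact notMem_sgFilledJuliaSet_of_tendsto (fun k => hs (φ k)) hsz hzK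

theorem IsNormalOn.mem_sgEscapingSet (hU : IsNormalOn H U) (hz : z ∈ U) (hw : w ∈ U)
    (hwI : w ∈ sgEscapingSet H) : z ∈ sgEscapingSet H := by
  by_contra hzI
  obtain ⟨s, R, hs, hinj, hsz⟩ := exists_injective_bounded_of_notMem_sgEscapingSet hzI
  obtain ⟨φ, -, hsφz⟩ :=
    hU.exists_subseq_tendsto hs hz hw (tendsto_of_mem_sgEscapingSet hs hinj hwI)
  obtain ⟨k, hk⟩ := (hsφz.eventually_gt_atTop R).exists
  exact (hsz (φ k)).not_gt hk

theorem IsNormalOn.mem_sgBungeeSet_iff (hU : IsNormalOn H U) (hz : z ∈ U) (hw : w ∈ U) :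
    w ∈ sgBungeeSet H ↔ z ∈ sgBungeeSet H := by
  have hI : w ∈ sgEscapingSet H ↔ z ∈ sgEscapingSet H :=
    ⟨hU.mem_sgEscapingSet hz hw, hU.mem_sgEscapingSet hw hz⟩
  have hK : w ∈ sgFilledJuliaSet H ↔ z ∈ sgFilledJuliaSet H :=
    ⟨hU.mem_sgFilledJuliaSet hw hz, hU.mem_sgFilledJuliaSet hz hw⟩
  simp only [sgBungeeSet, mem_compl_iff, mem_union, hI, hK]

theorem eventually_mem_sgFatouSet_and_mem_sgBungeeSet_iff (hz : z ∈ sgFatouSet H) :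
    ∀ᶠ w in 𝓝 z, w ∈ sgFatouSet H ∧ (w ∈ sgBungeeSet H ↔ z ∈ sgBungeeSet H) := by
  obtain ⟨U, hUo, hzU, hU⟩ := mem_sgFatouSet_iff.1 hz
  filter_upwards [hUo.mem_nhds hzU] with w hw
  exact ⟨mem_sgFatouSet_iff.2 ⟨U, hUo, hw, hU⟩, hU.mem_sgBungeeSet_iff hzU hw⟩

end Semigroup

theorem stmt_13_general (H : Set (ℂ → ℂ))
    (hosc : ∀ z ∈ sgFatouSet H, ¬ connectedComponentIn (sgFatouSet H) z ⊆ sgBungeeSet H) :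
    sgBungeeSet H ⊆ sgJuliaSet H := fun z hzBU hzF =>
  hosc z hzF (connectedComponentIn_subset_of_eventually_mem_iff
    (fun _ => eventually_mem_sgFatouSet_and_mem_sgBungeeSet_iff) hzBU)

/-- a transcendental semigroup with no oscillatory wandering domain
satisfies BU(H) ⊆ J(H). -/
theorem stmt_13 (H : Set (ℂ → ℂ)) (hH : TranscendentalSemigroup H)
    (hosc : ∀ z ∈ sgFatouSet H, ¬ connectedComponentIn (sgFatouSet H) z ⊆ sgBungeeSet H) :
    sgBungeeSet H ⊆ sgJuliaSet H :=
  stmt_13_general H hosc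
end
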